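/- For all positive integers n and k, the sum over all unordered partitions of n of the number of distinct parts equals the sum over i = 0, 1, ..., k-1 of the total number of occurrences of k among all partitions of n+i; that is, S(n) = Q_k(n) + Q_k(n+1) + ... + Q_k(n+k-1). -/

import Mathlib

/-- Number of unordered partitions of `n` (so `P 0 = 1`, via the empty partition). -/
def P (n : ℕ) : ℕ := Fintype.card (Nat.Partition n)

/-- Total number of occurrences of `k`, counted with multiplicity,
among all unordered partitions of `n` (so `Q k 0 = 0`). -/
def Q (k n : ℕ) : ℕ := ∑ p : Nat.Partition n, p.parts.count k

/-- Sum over all unordered partitions of `n` of the number of distinct parts. -/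
def S (n : ℕ) : ℕ := ∑ p : Nat.Partition n, p.parts.toFinset.card

/-- Number of unordered partitions of `n` containing `k` as a part. -/
def R (k n : ℕ) : ℕ := (Finset.univ.filter (fun p : Nat.Partition n => k ∈ p.parts)).card

/-!
Both sides equal `P 0 + P 1 + ⋯ + P (n - 1)`. Removing one copy of a part `j` is a bijection
from the partitions of `n` containing `j` onto the partitions of `n - j`, so `R j n = P (n - j)`;
summing over the possible distinct parts `j = 1, …, n` gives `S n = ∑_{v < n} P v`.
The same bijection gives `Q k (N + k) = Q k N + P N`, so the window sum
`T n = Q k n + ⋯ + Q k (n + k - 1)` satisfies `T (n + 1) = T n + P n`, while `T 0 = 0`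
because no partition of `N < k` has `k` as a part.
-/

open Finset Nat.Partition

lemma R_eq_P_sub {a n : ℕ} (ha1 : 1 ≤ a) (ha : a ≤ n) : R a n = P (n - a) := by
  rw [R, P, ← Fintype.card_subtype]
  exact Fintype.card_congr (partitionWithPartEquiv ha1 ha)

lemma Q_eq_Q_sub_add_P {a n : ℕ} (ha1 : 1 ≤ a) (ha : a ≤ n) :
    Q a n = Q a (n - a) + P (n - a) := by
  have h_restrict : Q a n = ∑ p : {p : n.Partition // a ∈ p.parts}, p.1.parts.count a := by
    rw [Q, ← sum_filter_of_ne fun _ _ hp => Multiset.count_ne_zero.mp hp,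
      sum_subtype (p := (a ∈ ·.parts)) _ fun _ => by simp]
  rw [h_restrict, ← (partitionWithPartEquiv ha1 ha).symm.sum_comp]
  simp [Q, P, Multiset.count_cons_self, sum_add_distrib]

lemma Q_eq_zero_of_lt {a n : ℕ} (h : n < a) : Q a n = 0 :=
  sum_eq_zero fun _ _ => Multiset.count_eq_zero.mpr fun ha => (le_of_mem_parts ha).not_gt h

lemma card_toFinset_parts_eq_sum {n : ℕ} (p : n.Partition) :
    p.parts.toFinset.card = ∑ j ∈ Icc 1 n, if j ∈ p.parts then 1 else 0 := by
  rw [← card_filter]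
  congr 1
  ext j
  simp only [Multiset.mem_toFinset, mem_filter, mem_Icc]
  exact ⟨fun hj => ⟨⟨p.parts_pos hj, le_of_mem_parts hj⟩, hj⟩, And.right⟩

lemma S_eq_sum_R (n : ℕ) : S n = ∑ j ∈ Icc 1 n, R j n := by
  simp only [S, card_toFinset_parts_eq_sum, R, card_filter]
  exact sum_comm

lemma S_eq_sum_range_P (n : ℕ) : S n = ∑ v ∈ range n, P v := by
  rw [S_eq_sum_R]
  refine sum_nbij' (n - ·) (n - ·) ?_ ?_ ?_ ?_
    fun j hj => R_eq_P_sub (mem_Icc.mp hj).1 (mem_Icc.mp hj).2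
  all_goals intro j hj; simp only [mem_Icc, mem_range] at hj ⊢; omega

lemma sum_range_Q_eq_sum_range_P {k : ℕ} (hk : 0 < k) (n : ℕ) :
    ∑ i ∈ range k, Q k (n + i) = ∑ v ∈ range n, P v := by
  induction n with
  | zero => exact sum_eq_zero fun i hi => Q_eq_zero_of_lt (by simpa using hi)
  | succ n ih =>
    have h_step : Q k (n + k) = Q k n + P n := by
      simpa using Q_eq_Q_sub_add_P (n := n + k) hk (by omega)
    have h_shift := sum_range_succ' (fun i => Q k (n + i)) k
    rw [sum_range_succ, h_step] at h_shift
    rw [sum_range_succ, ← ih]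
    simp only [add_zero, ← add_assoc, add_right_comm n 1] at h_shift ⊢
    omega

theorem stanley_extension_general (n k : ℕ) (hk : 0 < k) :
    S n = ∑ i ∈ Finset.range k, Q k (n + i) := by
  rw [S_eq_sum_range_P, sum_range_Q_eq_sum_range_P hk]

theorem stanley_extension (n k : ℕ) (hn : 0 < n) (hk : 0 < k) :
    S n = ∑ i ∈ Finset.range k, Q k (n + i) :=
  stanley_extension_general n k hk
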